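/- Let G=(V,E) be a finite connected graph, α>1, and g,h:V→ℝ positive. Then the 1-Yamabe equation Δ₁u + g·Sgn(u) ∋ h|u|^{α−1}·Sgn(u) has a nontrivial solution u ≥ 0, u ≢ 0. That is, there exists u:V→[0,∞), not identically zero, such that for every x∈V the sets A⁺(x) = −Δ₁u(x) + g(x)Sgn(u(x)) and A⁻(x) = h(x)|u(x)|^{α−1}Sgn(u(x)) have nonempty intersection. -/

import Mathlib

open Finset Filter Topology Pointwise

noncomputable def plap {V : Type} [Fintype V] (G : SimpleGraph V) [DecidableRel G.Adj]
    (μ : V → ℝ) (w : V → V → ℝ) (p : ℝ) (f : V → ℝ) (x : V) : ℝ :=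
  (μ x)⁻¹ * ∑ y ∈ G.neighborFinset x, w x y * (|f y - f x| ^ (p - 2) * (f y - f x))

noncomputable def Sgn (t : ℝ) : Set ℝ :=
  if t > 0 then {1} else if t < 0 then {-1} else Set.Icc (-1) 1

noncomputable def onelap {V : Type} [Fintype V] (G : SimpleGraph V) [DecidableRel G.Adj]
    (μ : V → ℝ) (w : V → V → ℝ) (u : V → ℝ) (x : V) : Set ℝ :=
  (μ x)⁻¹ • ∑ y ∈ G.neighborFinset x, w x y • Sgn (u y - u x)

/-! Minimize the energy `E(u) = ½ ∑ₓ ∑_{y∼x} w_{xy} |u y - u x| + ∑ₓ μ g u` over the compact set of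
nonnegative `u` with `∑ₓ μ h u^α = 1`. The one-sided variations `m ± ε δₓ` of a minimizer `m`
(only `+` where `m x = 0`) bound the one-sided derivatives of `E` from both sides; these bounds say
exactly that `g - E(m) h m^{α-1}` lies in the interval `Δ₁ m (x)` where `m x > 0`, and that
`Δ₁ m (x)` meets `[-g, g]` where `m x = 0`. Since `Δ₁` is 0-homogeneous and `h |u|^{α-1}` is
`(α-1)`-homogeneous, the multiplier `E(m)` is absorbed by rescaling `m`. -/

lemma Finset.sum_apply_update {ι α M : Type*} [Fintype ι] [DecidableEq ι] [AddCommGroup M]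
    (f : ι → α → M) (u : ι → α) (i : ι) (c : α) :
    ∑ j, f j (Function.update u i c j) = ∑ j, f j (u j) + (f i c - f i (u i)) := by
  simp only [Function.apply_update f u i c, Finset.sum_update_of_mem (Finset.mem_univ i),
    Finset.sum_eq_add_sum_sdiff_singleton_of_mem (Finset.mem_univ i) (fun j => f j (u j))]
  abel

lemma SimpleGraph.sum_sum_neighborFinset_comm {V M : Type*} [Fintype V] [AddCommMonoid M]
    (G : SimpleGraph V) [DecidableRel G.Adj] (f : V → V → M) :
    ∑ x, ∑ y ∈ G.neighborFinset x, f x y = ∑ x, ∑ y ∈ G.neighborFinset x, f y x := by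
  simp only [SimpleGraph.neighborFinset_eq_filter, Finset.sum_filter]
  rw [Finset.sum_comm]
  simp only [G.adj_comm]

lemma HasDerivAt.le_of_eventually_le_add {f : ℝ → ℝ} {f' a b : ℝ} (hf : HasDerivAt f f' a)
    (hle : ∀ᶠ t in 𝓝[>] a, f t ≤ f a + (t - a) * b) : f' ≤ b := by
  refine le_of_tendsto ((hasDerivAt_iff_tendsto_slope.1 hf).mono_left (nhdsGT_le_nhdsNE a)) ?_
  filter_upwards [hle, self_mem_nhdsWithin] with t ht hta
  rw [slope_def_field, div_le_iff₀ (sub_pos.2 hta)]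
  linarith

lemma Set.sum_smul_Icc {ι : Type*} (s : Finset ι) {c a b : ι → ℝ} (hc : ∀ i ∈ s, 0 ≤ c i)
    (hab : ∀ i ∈ s, a i ≤ b i) :
    ∑ i ∈ s, c i • Set.Icc (a i) (b i) = Set.Icc (∑ i ∈ s, c i * a i) (∑ i ∈ s, c i * b i) := by
  classical
  induction s using Finset.induction_on with
  | empty => simp [← Set.singleton_zero]
  | insert i s hi ih =>
    have hci := hc i (Finset.mem_insert_self i s)
    have habi := hab i (Finset.mem_insert_self i s)
    have hsmul : c i • Set.Icc (a i) (b i) = Set.Icc (c i * a i) (c i * b i) := by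
      rcases hci.eq_or_lt with hci0 | hci0
      · rw [← hci0, Set.zero_smul_set (Set.nonempty_Icc.2 habi)]
        simp [← Set.singleton_zero]
      · exact LinearOrderedField.smul_Icc hci0
    simp only [Finset.sum_insert hi]
    rw [ih (fun j hj => hc j (Finset.mem_insert_of_mem hj))
      (fun j hj => hab j (Finset.mem_insert_of_mem hj)), hsmul, Set.Icc_add_Icc]
    · exact mul_le_mul_of_nonneg_left habi hci
    · exact Finset.sum_le_sum fun j hj =>
        mul_le_mul_of_nonneg_left (hab j (Finset.mem_insert_of_mem hj))
          (hc j (Finset.mem_insert_of_mem hj))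

noncomputable def sgnMin (t : ℝ) : ℝ := if 0 < t then 1 else -1

lemma sgnMin_of_nonpos {t : ℝ} (ht : t ≤ 0) : sgnMin t = -1 := if_neg ht.not_gt

lemma sgnMin_le_neg_sgnMin_neg (t : ℝ) : sgnMin t ≤ -sgnMin (-t) := by
  unfold sgnMin; split_ifs <;> linarith

lemma Sgn_eq_Icc (t : ℝ) : Sgn t = Set.Icc (sgnMin t) (-sgnMin (-t)) := by
  unfold Sgn sgnMin
  rcases lt_trichotomy t 0 with ht | rfl | ht
  · simp [ht, ht.not_gt]
  · norm_num
  · simp [ht, ht.not_gt]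

lemma Sgn_zero : Sgn 0 = Set.Icc (-1) 1 := by simp [Sgn]

lemma Sgn_of_pos {t : ℝ} (ht : 0 < t) : Sgn t = {1} := if_pos ht

lemma Sgn_mul_of_pos {s : ℝ} (hs : 0 < s) (t : ℝ) : Sgn (s * t) = Sgn t := by
  simp only [Sgn_eq_Icc, sgnMin, ← mul_neg, mul_pos_iff_of_pos_left hs]

lemma eventually_abs_sub_mul_le (d : ℝ) {σ : ℝ} (hσ : |σ| = 1) :
    ∀ᶠ ε in 𝓝[>] 0, |d - ε * σ| ≤ |d| - ε * sgnMin (σ * d) := by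
  have hσσ : σ * σ = 1 := by rw [← abs_mul_abs_self, hσ, one_mul]
  have hσd : ∀ ε, |d - ε * σ| = |σ * d - ε| := fun ε => by
    rw [← one_mul |d - ε * σ|, ← hσ, ← abs_mul]
    congr 1
    linear_combination -ε * hσσ
  have hd : |d| = |σ * d| := by rw [abs_mul, hσ, one_mul]
  unfold sgnMin
  split_ifs with hpos
  · filter_upwards [Ioo_mem_nhdsGT hpos] with ε hε
    rw [hσd, hd, abs_of_pos hpos, abs_of_pos (sub_pos.2 hε.2)]
    linarith
  · filter_upwards [self_mem_nhdsWithin] with ε (hε : 0 < ε)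
    rw [hσd, hd]
    linarith [abs_sub (σ * d) ε, abs_of_pos hε]

section OneLaplacian

variable {V : Type} [Fintype V] (G : SimpleGraph V) [DecidableRel G.Adj] (μ : V → ℝ)
  (w : V → V → ℝ)

lemma onelap_eq_Icc {x : V} (hμ : 0 < μ x) (hw : ∀ y ∈ G.neighborFinset x, 0 ≤ w x y)
    (u : V → ℝ) :
    onelap G μ w u x = Set.Icc ((μ x)⁻¹ * ∑ y ∈ G.neighborFinset x, w x y * sgnMin (u y - u x))
      ((μ x)⁻¹ * ∑ y ∈ G.neighborFinset x, w x y * -sgnMin (u x - u y)) := by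
  simp only [onelap, Sgn_eq_Icc, neg_sub]
  rw [Set.sum_smul_Icc _ hw fun y _ => by simpa using sgnMin_le_neg_sgnMin_neg (u y - u x),
    LinearOrderedField.smul_Icc (inv_pos.2 hμ)]

lemma onelap_const_smul {s : ℝ} (hs : 0 < s) (u : V → ℝ) (x : V) :
    onelap G μ w (s • u) x = onelap G μ w u x := by
  simp only [onelap, Pi.smul_apply, smul_eq_mul, ← mul_sub, Sgn_mul_of_pos hs]

end OneLaplacian

lemma inter_smul_Sgn_nonempty_of_pos {A : Set ℝ} {g κ t : ℝ} (ht : 0 < t) (hA : g - κ ∈ A) :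
    ((-A + g • Sgn t) ∩ (κ • Sgn t)).Nonempty := by
  rw [Sgn_of_pos ht]
  exact ⟨κ, ⟨-(g - κ), Set.neg_mem_neg.2 hA, g, by simp, by ring⟩, by simp⟩

lemma inter_smul_Sgn_nonempty_of_zero {A : Set ℝ} {g κ c : ℝ} (hg : 0 < g) (hc : c ∈ A)
    (hcg : |c| ≤ g) : ((-A + g • Sgn 0) ∩ (κ • Sgn 0)).Nonempty := by
  rw [Sgn_zero]
  have hr : c / g ∈ Set.Icc (-1) 1 := by
    rwa [Set.mem_Icc, ← abs_le, abs_div, abs_of_pos hg, div_le_one hg]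
  refine ⟨0, ⟨-c, Set.neg_mem_neg.2 hc, g * (c / g), Set.smul_mem_smul_set hr, ?_⟩, 0, ?_, ?_⟩
  · simp [mul_div_cancel₀ c hg.ne']
  · norm_num
  · simp

section Variational

variable {V : Type} [Fintype V]

noncomputable def powerIntegral (μ h : V → ℝ) (α : ℝ) (u : V → ℝ) : ℝ :=
  ∑ x, μ x * h x * u x ^ α

noncomputable def totalVariation (G : SimpleGraph V) [DecidableRel G.Adj] (w : V → V → ℝ)
    (u : V → ℝ) : ℝ :=
  (∑ x, ∑ y ∈ G.neighborFinset x, w x y * |u y - u x|) / 2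

noncomputable def yamabeEnergy (G : SimpleGraph V) [DecidableRel G.Adj] (μ : V → ℝ)
    (w : V → V → ℝ) (g : V → ℝ) (u : V → ℝ) : ℝ :=
  totalVariation G w u + ∑ x, μ x * g x * u x

def normalizedCone (μ h : V → ℝ) (α : ℝ) : Set (V → ℝ) :=
  {u | 0 ≤ u ∧ powerIntegral μ h α u = 1}

variable (G : SimpleGraph V) [DecidableRel G.Adj] {μ h g : V → ℝ} {w : V → V → ℝ} {α : ℝ}

lemma totalVariation_update [DecidableEq V] (hsym : ∀ x y, G.Adj x y → w x y = w y x)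
    (u : V → ℝ) (x : V) (c : ℝ) :
    totalVariation G w (Function.update u x c) =
      totalVariation G w u + ∑ y ∈ G.neighborFinset x, w x y * (|u y - c| - |u y - u x|) := by
  set δ : V → ℝ := fun y => |u y - c| - |u y - u x|
  have hterm : ∀ z, ∀ y ∈ G.neighborFinset z,
      w z y * |Function.update u x c y - Function.update u x c z| =
        w z y * |u y - u z| + (w z y * (if z = x then δ y else 0) +
          w z y * (if y = x then δ z else 0)) := by
    intro z y hy
    have hzy : z ≠ y := G.ne_of_adj ((G.mem_neighborFinset z y).1 hy)
    by_cases hz : z = x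
    · subst hz
      simp [δ, hzy.symm]
      ring
    · by_cases hy : y = x
      · subst hy
        simp [δ, hz, abs_sub_comm]
        ring
      · simp [hz, hy]
  have hstar : ∀ F : V → ℝ, ∑ z, ∑ y ∈ G.neighborFinset z, w z y * (if z = x then F y else 0) =
      ∑ y ∈ G.neighborFinset x, w x y * F y := by
    intro F
    rw [Fintype.sum_eq_single x fun z hz => by simp [hz]]
    simp
  have hswap : ∑ z, ∑ y ∈ G.neighborFinset z, w z y * (if y = x then δ z else 0) =
      ∑ z, ∑ y ∈ G.neighborFinset z, w z y * (if z = x then δ y else 0) := by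
    rw [G.sum_sum_neighborFinset_comm]
    refine Finset.sum_congr rfl fun z _ => Finset.sum_congr rfl fun y hy => ?_
    rw [hsym z y ((G.mem_neighborFinset z y).1 hy)]
  unfold totalVariation
  simp only [Finset.sum_congr rfl fun z _ => Finset.sum_congr rfl (hterm z),
    Finset.sum_add_distrib, hswap, hstar]
  ring

lemma yamabeEnergy_update_le [DecidableEq V] (hw : ∀ x y, G.Adj x y → 0 ≤ w x y)
    (hsym : ∀ x y, G.Adj x y → w x y = w y x) (m : V → ℝ) (x : V) {σ : ℝ} (hσ : |σ| = 1) :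
    ∀ᶠ ε in 𝓝[>] 0, yamabeEnergy G μ w g (Function.update m x (m x + ε * σ)) ≤
      yamabeEnergy G μ w g m +
        ε * (σ * (μ x * g x) - ∑ y ∈ G.neighborFinset x, w x y * sgnMin (σ * (m y - m x))) := by
  filter_upwards [(G.neighborFinset x).eventually_all.2
    fun y _ => eventually_abs_sub_mul_le (m y - m x) hσ] with ε hε
  have hTV : ∑ y ∈ G.neighborFinset x, w x y * (|m y - (m x + ε * σ)| - |m y - m x|) ≤
      -(ε * ∑ y ∈ G.neighborFinset x, w x y * sgnMin (σ * (m y - m x))) := by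
    rw [Finset.mul_sum, ← Finset.sum_neg_distrib]
    refine Finset.sum_le_sum fun y hy => ?_
    have hy' := hε y hy
    rw [sub_sub] at hy'
    calc w x y * (|m y - (m x + ε * σ)| - |m y - m x|)
        ≤ w x y * -(ε * sgnMin (σ * (m y - m x))) :=
          mul_le_mul_of_nonneg_left (by linarith) (hw x y ((G.mem_neighborFinset x y).1 hy))
      _ = _ := by ring
  unfold yamabeEnergy
  rw [totalVariation_update G hsym, Finset.sum_apply_update (fun z t => μ z * g z * t)]
  linarith

lemma powerIntegral_update [DecidableEq V] (u : V → ℝ) (x : V) (c : ℝ) :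
    powerIntegral μ h α (Function.update u x c) =
      powerIntegral μ h α u + μ x * h x * (c ^ α - u x ^ α) := by
  unfold powerIntegral
  rw [Finset.sum_apply_update (fun z t => μ z * h z * t ^ α)]
  ring

lemma powerIntegral_smul {t : ℝ} (ht : 0 ≤ t) {u : V → ℝ} (hu : 0 ≤ u) :
    powerIntegral μ h α (t • u) = t ^ α * powerIntegral μ h α u := by
  simp only [powerIntegral, Finset.mul_sum, Pi.smul_apply, smul_eq_mul,
    Real.mul_rpow ht (hu _)]
  exact Finset.sum_congr rfl fun z _ => by ring

lemma yamabeEnergy_smul {t : ℝ} (ht : 0 ≤ t) (u : V → ℝ) :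
    yamabeEnergy G μ w g (t • u) = t * yamabeEnergy G μ w g u := by
  simp only [yamabeEnergy, totalVariation, Pi.smul_apply, smul_eq_mul, ← mul_sub, abs_mul,
    abs_of_nonneg ht, mul_left_comm _ t, ← Finset.mul_sum]
  ring

lemma totalVariation_nonneg (hw : ∀ x y, G.Adj x y → 0 ≤ w x y) (u : V → ℝ) :
    0 ≤ totalVariation G w u :=
  div_nonneg (Finset.sum_nonneg fun z _ => Finset.sum_nonneg fun y hy =>
    mul_nonneg (hw z y ((G.mem_neighborFinset z y).1 hy)) (abs_nonneg _)) zero_le_two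

lemma yamabeEnergy_nonneg (hw : ∀ x y, G.Adj x y → 0 ≤ w x y) (hμg : ∀ x, 0 ≤ μ x * g x)
    {u : V → ℝ} (hu : 0 ≤ u) : 0 ≤ yamabeEnergy G μ w g u :=
  add_nonneg (totalVariation_nonneg G hw u)
    (Finset.sum_nonneg fun z _ => mul_nonneg (hμg z) (hu z))

lemma continuous_powerIntegral (hα : 0 ≤ α) : Continuous (powerIntegral μ h α) :=
  continuous_finsetSum _ fun z _ =>
    continuous_const.mul ((continuous_apply z).rpow_const fun _ => Or.inr hα)

lemma continuous_yamabeEnergy : Continuous (yamabeEnergy G μ w g) := by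
  unfold yamabeEnergy totalVariation
  fun_prop

lemma isCompact_normalizedCone (hμh : ∀ x, 0 < μ x * h x) (hα : 0 < α) :
    IsCompact (normalizedCone μ h α) := by
  have hclosed : IsClosed (normalizedCone μ h α) :=
    (isClosed_le continuous_const continuous_id).inter
      (isClosed_singleton.preimage (continuous_powerIntegral hα.le))
  refine (isCompact_univ_pi fun z => isCompact_Icc (a := 0) (b := (1 / (μ z * h z)) ^ α⁻¹))
    |>.of_isClosed_subset hclosed fun u ⟨hu, hN⟩ z _ => ⟨hu z, ?_⟩
  have hterm : μ z * h z * u z ^ α ≤ 1 :=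
    hN ▸ Finset.single_le_sum (f := fun y => μ y * h y * u y ^ α)
      (fun y _ => mul_nonneg (hμh y).le (Real.rpow_nonneg (hu y) α)) (Finset.mem_univ z)
  rwa [Real.le_rpow_inv_iff_of_pos (hu z) (one_div_pos.2 (hμh z)).le hα, le_div_iff₀' (hμh z)]

lemma rpow_neg_inv_smul_mem_normalizedCone (hα : 0 < α) {v : V → ℝ} (hv : 0 ≤ v)
    (hN : 0 < powerIntegral μ h α v) :
    powerIntegral μ h α v ^ (-α⁻¹) • v ∈ normalizedCone μ h α := by
  refine ⟨smul_nonneg (Real.rpow_nonneg hN.le _) hv, ?_⟩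
  rw [powerIntegral_smul (Real.rpow_nonneg hN.le _) hv, ← Real.rpow_mul hN.le,
    neg_mul, inv_mul_cancel₀ hα.ne', Real.rpow_neg_one, inv_mul_cancel₀ hN.ne']

lemma exists_isMinOn_yamabeEnergy [Nonempty V] (hμh : ∀ x, 0 < μ x * h x) (hα : 0 < α) :
    ∃ m ∈ normalizedCone μ h α, IsMinOn (yamabeEnergy G μ w g) (normalizedCone μ h α) m := by
  have hN : 0 < powerIntegral μ h α 1 := by
    simpa [powerIntegral] using Finset.sum_pos (fun z _ => hμh z) Finset.univ_nonempty
  exact (isCompact_normalizedCone hμh hα).exists_isMinOn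
    ⟨_, rpow_neg_inv_smul_mem_normalizedCone hα zero_le_one hN⟩
    (continuous_yamabeEnergy G).continuousOn

/-- Minimality on the normalized cone, transported to the whole cone by homogeneity. -/
lemma yamabeEnergy_mul_rpow_inv_le (hw : ∀ x y, G.Adj x y → 0 ≤ w x y)
    (hμg : ∀ x, 0 ≤ μ x * g x) (hμh : ∀ x, 0 ≤ μ x * h x) (hα : 0 < α) {m : V → ℝ}
    (hmin : IsMinOn (yamabeEnergy G μ w g) (normalizedCone μ h α) m) {v : V → ℝ} (hv : 0 ≤ v) :
    yamabeEnergy G μ w g m * powerIntegral μ h α v ^ α⁻¹ ≤ yamabeEnergy G μ w g v := by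
  have hN : 0 ≤ powerIntegral μ h α v :=
    Finset.sum_nonneg fun z _ => mul_nonneg (hμh z) (Real.rpow_nonneg (hv z) α)
  rcases hN.eq_or_lt with hN | hN
  · rw [← hN, Real.zero_rpow (inv_ne_zero hα.ne'), mul_zero]
    exact yamabeEnergy_nonneg G hw hμg hv
  · have hτ : 0 ≤ powerIntegral μ h α v ^ (-α⁻¹) := Real.rpow_nonneg hN.le _
    have hle : yamabeEnergy G μ w g m ≤
        yamabeEnergy G μ w g (powerIntegral μ h α v ^ (-α⁻¹) • v) :=
      hmin (rpow_neg_inv_smul_mem_normalizedCone hα hv hN)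
    rw [yamabeEnergy_smul G hτ, Real.rpow_neg hN.le] at hle
    rwa [← le_div_iff₀ (Real.rpow_pos_of_pos hN _), div_eq_inv_mul]

/-- The Euler–Lagrange inequality of a minimizer, for the one-sided variation `m + ε σ δₓ`. -/
theorem yamabeEnergy_mul_le_of_isMinOn [DecidableEq V] (hw : ∀ x y, G.Adj x y → 0 ≤ w x y)
    (hsym : ∀ x y, G.Adj x y → w x y = w y x) (hμg : ∀ x, 0 ≤ μ x * g x)
    (hμh : ∀ x, 0 ≤ μ x * h x) (hα : 1 ≤ α) {m : V → ℝ} (hm : m ∈ normalizedCone μ h α)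
    (hmin : IsMinOn (yamabeEnergy G μ w g) (normalizedCone μ h α) m) (x : V) {σ : ℝ}
    (hσ : |σ| = 1) (hdir : 0 < σ ∨ 0 < m x) :
    yamabeEnergy G μ w g m * (μ x * h x * m x ^ (α - 1) * σ) ≤
      σ * (μ x * g x) - ∑ y ∈ G.neighborFinset x, w x y * sgnMin (σ * (m y - m x)) := by
  set E := yamabeEnergy G μ w g m
  set v : ℝ → V → ℝ := fun ε => Function.update m x (m x + ε * σ)
  have hv0 : v 0 = m := by simp [v]
  have hN : ∀ ε, powerIntegral μ h α (v ε) = 1 + μ x * h x * ((m x + ε * σ) ^ α - m x ^ α) :=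
    fun ε => by rw [powerIntegral_update, hm.2]
  have hline : HasDerivAt (fun ε : ℝ => m x + ε * σ) σ 0 := by
    simpa using ((hasDerivAt_id (0 : ℝ)).mul_const σ).const_add (m x)
  have hderiv : HasDerivAt (fun ε => E * powerIntegral μ h α (v ε) ^ α⁻¹)
      (E * (μ x * h x * m x ^ (α - 1) * σ)) 0 := by
    have hNderiv := ((hline.rpow_const (Or.inr hα)).sub_const (m x ^ α)).const_mul (μ x * h x)
      |>.const_add 1
    simp only [← hN, zero_mul, add_zero] at hNderiv
    have := (hNderiv.rpow_const (p := α⁻¹) (Or.inl (by simp [hv0, hm.2]))).const_mul E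
    refine this.congr_deriv ?_
    rw [hv0, hm.2, Real.one_rpow]
    field_simp
  have hv_nonneg : ∀ᶠ ε in 𝓝[>] 0, 0 ≤ v ε := by
    suffices ∀ᶠ ε in 𝓝[>] 0, 0 ≤ m x + ε * σ from
      this.mono fun ε hε => le_update_iff.2 ⟨hε, fun j _ => hm.1 j⟩
    rcases hdir with hσ0 | hmx
    · filter_upwards [self_mem_nhdsWithin] with ε (hε : 0 < ε)
      have hmx : 0 ≤ m x := hm.1 x
      positivity
    · have : ∀ᶠ ε in 𝓝 0, 0 < m x + ε * σ :=
        hline.continuousAt.eventually (eventually_gt_nhds (by simpa using hmx))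
      exact Filter.Eventually.filter_mono nhdsWithin_le_nhds (this.mono fun ε hε => hε.le)
  refine hderiv.le_of_eventually_le_add ?_
  filter_upwards [hv_nonneg, yamabeEnergy_update_le G hw hsym m x hσ] with ε hvε hE
  calc E * powerIntegral μ h α (v ε) ^ α⁻¹ ≤ yamabeEnergy G μ w g (v ε) :=
        yamabeEnergy_mul_rpow_inv_le G hw hμg hμh (by linarith) hmin hvε
    _ ≤ _ := hE
    _ = _ := by rw [hv0, hm.2, Real.one_rpow, mul_one, sub_zero]

lemma ne_zero_of_mem_normalizedCone (hα : α ≠ 0) {u : V → ℝ} (hu : u ∈ normalizedCone μ h α) :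
    u ≠ 0 := by
  rintro rfl
  simpa [powerIntegral, Real.zero_rpow hα] using hu.2

lemma yamabeEnergy_pos (hw : ∀ x y, G.Adj x y → 0 ≤ w x y) (hμg : ∀ x, 0 < μ x * g x)
    {u : V → ℝ} (hu : 0 ≤ u) (hu0 : u ≠ 0) : 0 < yamabeEnergy G μ w g u := by
  obtain ⟨x, hx⟩ := Function.ne_iff.1 hu0
  have hx : 0 < u x := (hu x).lt_of_ne' hx
  have hsum : μ x * g x * u x ≤ ∑ z, μ z * g z * u z :=
    Finset.single_le_sum (f := fun z => μ z * g z * u z)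
      (fun z _ => mul_nonneg (hμg z).le (hu z)) (Finset.mem_univ x)
  have := totalVariation_nonneg G hw u
  have := mul_pos (hμg x) hx
  unfold yamabeEnergy
  linarith

lemma sub_mem_onelap_of_isMinOn [DecidableEq V] (hw : ∀ x y, G.Adj x y → 0 ≤ w x y)
    (hsym : ∀ x y, G.Adj x y → w x y = w y x) (hμ : ∀ x, 0 < μ x) (hμg : ∀ x, 0 ≤ μ x * g x)
    (hμh : ∀ x, 0 ≤ μ x * h x) (hα : 1 ≤ α) {m : V → ℝ} (hm : m ∈ normalizedCone μ h α)
    (hmin : IsMinOn (yamabeEnergy G μ w g) (normalizedCone μ h α) m) {x : V} (hx : 0 < m x) :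
    g x - yamabeEnergy G μ w g m * h x * m x ^ (α - 1) ∈ onelap G μ w m x := by
  have hup := yamabeEnergy_mul_le_of_isMinOn G hw hsym hμg hμh hα hm hmin x (σ := 1)
    (by simp) (Or.inl one_pos)
  have hdown := yamabeEnergy_mul_le_of_isMinOn G hw hsym hμg hμh hα hm hmin x (σ := -1)
    (by simp) (Or.inr hx)
  simp only [one_mul, neg_one_mul, neg_sub] at hup hdown
  rw [onelap_eq_Icc G μ w (hμ x) (fun y hy => hw x y ((G.mem_neighborFinset x y).1 hy)) m,
    Set.mem_Icc, inv_mul_le_iff₀ (hμ x), le_inv_mul_iff₀ (hμ x)]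
  simp only [mul_neg, Finset.sum_neg_distrib]
  constructor <;> linarith

lemma exists_mem_onelap_abs_le_of_isMinOn [DecidableEq V] (hw : ∀ x y, G.Adj x y → 0 ≤ w x y)
    (hsym : ∀ x y, G.Adj x y → w x y = w y x) (hμ : ∀ x, 0 < μ x) (hg : ∀ x, 0 ≤ g x)
    (hμh : ∀ x, 0 ≤ μ x * h x) (hα : 1 < α) {m : V → ℝ} (hm : m ∈ normalizedCone μ h α)
    (hmin : IsMinOn (yamabeEnergy G μ w g) (normalizedCone μ h α) m) {x : V} (hx : m x = 0) :
    ∃ c ∈ onelap G μ w m x, |c| ≤ g x := by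
  have hwx : ∀ y ∈ G.neighborFinset x, 0 ≤ w x y :=
    fun y hy => hw x y ((G.mem_neighborFinset x y).1 hy)
  have hup := yamabeEnergy_mul_le_of_isMinOn G hw hsym
    (fun z => mul_nonneg (hμ z).le (hg z)) hμh hα.le hm hmin x (σ := 1) (by simp) (Or.inl one_pos)
  have hp : m x ^ (α - 1) = 0 := by rw [hx, Real.zero_rpow (by linarith)]
  rw [hp, mul_zero, zero_mul, mul_zero] at hup
  simp only [one_mul] at hup
  rw [onelap_eq_Icc G μ w (hμ x) hwx m]
  set L := (μ x)⁻¹ * ∑ y ∈ G.neighborFinset x, w x y * sgnMin (m y - m x)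
  set U := (μ x)⁻¹ * ∑ y ∈ G.neighborFinset x, w x y * -sgnMin (m x - m y)
  have hLU : L ≤ U := mul_le_mul_of_nonneg_left (Finset.sum_le_sum fun y hy =>
    mul_le_mul_of_nonneg_left (by simpa using sgnMin_le_neg_sgnMin_neg (m y - m x)) (hwx y hy))
    (inv_nonneg.2 (hμ x).le)
  have hU : 0 ≤ U := mul_nonneg (inv_nonneg.2 (hμ x).le) <| Finset.sum_nonneg fun y hy => by
    have hmy : 0 ≤ m y := hm.1 y
    rw [sgnMin_of_nonpos (by linarith), neg_neg, mul_one]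
    exact hwx y hy
  have hLg : L ≤ g x := by
    rw [inv_mul_le_iff₀ (hμ x)]
    linarith
  refine ⟨max L 0, ⟨le_max_left _ _, max_le hLU hU⟩, ?_⟩
  rw [abs_of_nonneg (le_max_right _ _)]
  exact max_le hLg (hg x)

end Variational

theorem one_yamabe_solvable_general {V : Type} [Fintype V] [Nonempty V]
    (G : SimpleGraph V) [DecidableRel G.Adj]
    (μ : V → ℝ) (w : V → V → ℝ) (hμ : ∀ x, 0 < μ x)
    (hw : ∀ x y, G.Adj x y → 0 < w x y) (hsym : ∀ x y, G.Adj x y → w x y = w y x)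
    (α : ℝ) (hα : 1 < α) (g h : V → ℝ) (hg : ∀ x, 0 < g x) (hh : ∀ x, 0 < h x) :
    ∃ u : V → ℝ, (∀ x, 0 ≤ u x) ∧ u ≠ 0 ∧
      ∀ x, ((-(onelap G μ w u x) + g x • Sgn (u x)) ∩
            ((h x * |u x| ^ (α - 1)) • Sgn (u x))).Nonempty := by
  classical
  have hw' : ∀ x y, G.Adj x y → 0 ≤ w x y := fun x y hxy => (hw x y hxy).le
  have hμg : ∀ x, 0 < μ x * g x := fun x => mul_pos (hμ x) (hg x)
  have hμh : ∀ x, 0 < μ x * h x := fun x => mul_pos (hμ x) (hh x)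
  obtain ⟨m, hm, hmin⟩ := exists_isMinOn_yamabeEnergy G (w := w) (g := g) hμh (by linarith)
  have hm0 := ne_zero_of_mem_normalizedCone (by linarith) hm
  set E := yamabeEnergy G μ w g m
  have hE : 0 < E := yamabeEnergy_pos G hw' hμg hm.1 hm0
  obtain ⟨s, hs, hsE⟩ : ∃ s : ℝ, 0 < s ∧ s ^ (α - 1) = E :=
    ⟨E ^ (α - 1)⁻¹, Real.rpow_pos_of_pos hE _, Real.rpow_inv_rpow hE.le (by linarith)⟩
  refine ⟨s • m, fun x => smul_nonneg hs.le (hm.1 x), smul_ne_zero hs.ne' hm0, fun x => ?_⟩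
  rw [onelap_const_smul G μ w hs, Pi.smul_apply, smul_eq_mul]
  have hmx : 0 ≤ m x := hm.1 x
  rcases hmx.eq_or_lt with hx | hx
  · obtain ⟨c, hc, hcg⟩ := exists_mem_onelap_abs_le_of_isMinOn G hw' hsym hμ
      (fun x => (hg x).le) (fun x => (hμh x).le) hα hm hmin hx.symm
    rw [← hx, mul_zero]
    exact inter_smul_Sgn_nonempty_of_zero (hg x) hc hcg
  · have hκ : h x * |s * m x| ^ (α - 1) = E * h x * m x ^ (α - 1) := by
      rw [abs_of_pos (mul_pos hs hx), Real.mul_rpow hs.le hx.le, hsE]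
      ring
    rw [hκ]
    exact inter_smul_Sgn_nonempty_of_pos (mul_pos hs hx) (sub_mem_onelap_of_isMinOn G hw' hsym hμ
      (fun x => (hμg x).le) (fun x => (hμh x).le) hα.le hm hmin hx)

theorem one_yamabe_solvable {V : Type} [Fintype V] [Nonempty V]
    (G : SimpleGraph V) [DecidableRel G.Adj] (hconn : G.Connected)
    (μ : V → ℝ) (w : V → V → ℝ) (hμ : ∀ x, 0 < μ x)
    (hw : ∀ x y, G.Adj x y → 0 < w x y) (hsym : ∀ x y, G.Adj x y → w x y = w y x)
    (α : ℝ) (hα : 1 < α) (g h : V → ℝ) (hg : ∀ x, 0 < g x) (hh : ∀ x, 0 < h x) :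
    ∃ u : V → ℝ, (∀ x, 0 ≤ u x) ∧ u ≠ 0 ∧
      ∀ x, ((-(onelap G μ w u x) + g x • Sgn (u x)) ∩
            ((h x * |u x| ^ (α - 1)) • Sgn (u x))).Nonempty :=
  one_yamabe_solvable_general G μ w hμ hw hsym α hα g h hg hh
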